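/- arXiv:2312.08516 — 4 statements merged into one kernel-verified Lean document; each statement's English description precedes it below -/
import Mathlib

section
/- Let 0 < α < 1, T > 0, and let f : ℝ^m → ℝ^m be continuously differentiable. Let y : [0,T] × ℝ^m → ℝ^m be continuous and satisfy, for every t ∈ [0,T] and ρ ∈ ℝ^m, the integral equation y(t,ρ) = ρ + (1/Γ(α)) ∫₀^t (t−x)^{α−1} f(y(x,ρ)) dx. Assume that for each x ∈ [0,T] the map ρ ↦ y(x,ρ) is differentiable with derivative Φ(x,ρ) ∈ ℝ^{m×m}, and that Φ is jointly continuous on [0,T] × ℝ^m. Then for every t ∈ [0,T] and ρ ∈ ℝ^m, Φ(t,ρ) = I + (1/Γ(α)) ∫₀^t (t−x)^{α−1} f'(y(x,ρ)) Φ(x,ρ) dx, where f'(y) denotes the Jacobian matrix of f at y and I the m×m identity matrix. -/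
open MeasureTheory intervalIntegral

set_option maxHeartbeats 1000000

/-- The derivative of the solution of a fractional IVP with respect to the initial
value satisfies the integral form of the fractional variational problem. -/
theorem fractional_variational_integral_equation
    (m : ℕ) (α T : ℝ) (hα0 : 0 < α) (hα1 : α < 1) (hT : 0 < T)
    (f : (Fin m → ℝ) → (Fin m → ℝ)) (hf : ContDiff ℝ 1 f)
    (y : ℝ → (Fin m → ℝ) → (Fin m → ℝ))
    (hy_cont : ContinuousOn (fun p : ℝ × (Fin m → ℝ) => y p.1 p.2)
      (Set.Icc 0 T ×ˢ Set.univ))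
    (hy_eq : ∀ t ∈ Set.Icc (0:ℝ) T, ∀ ρ : Fin m → ℝ,
      y t ρ = ρ + (Real.Gamma α)⁻¹ •
        ∫ x in (0:ℝ)..t, ((t - x) ^ (α - 1)) • f (y x ρ))
    (Φ : ℝ → (Fin m → ℝ) → ((Fin m → ℝ) →L[ℝ] (Fin m → ℝ)))
    (hΦ : ∀ x ∈ Set.Icc (0:ℝ) T, ∀ ρ : Fin m → ℝ,
      HasFDerivAt (fun σ => y x σ) (Φ x ρ) ρ)
    (hΦ_cont : ContinuousOn (fun p : ℝ × (Fin m → ℝ) => Φ p.1 p.2)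
      (Set.Icc 0 T ×ˢ Set.univ)) :
    ∀ t ∈ Set.Icc (0:ℝ) T, ∀ ρ : Fin m → ℝ,
      Φ t ρ = ContinuousLinearMap.id ℝ (Fin m → ℝ) + (Real.Gamma α)⁻¹ •
        ∫ x in (0:ℝ)..t, ((t - x) ^ (α - 1)) •
          ((fderiv ℝ f (y x ρ)).comp (Φ x ρ)) := by
  intro t ht ρ
  have ht0 : (0:ℝ) ≤ t := ht.1
  have htT : t ≤ T := ht.2
  have hsub : Set.Ioc (0:ℝ) t ⊆ Set.Icc (0:ℝ) T :=
    fun x hx => ⟨le_of_lt hx.1, hx.2.trans htT⟩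
  have huIoc : Set.uIoc (0:ℝ) t = Set.Ioc (0:ℝ) t := Set.uIoc_of_le ht0
  -- continuity helpers
  have hdf : Continuous (fderiv ℝ f) := hf.continuous_fderiv one_ne_zero
  have hfd : ∀ z, HasFDerivAt f (fderiv ℝ f z) z :=
    fun z => (hf.differentiable one_ne_zero z).hasFDerivAt
  have hyc : ∀ σ, ContinuousOn (fun x => y x σ) (Set.Icc (0:ℝ) T) := fun σ =>
    hy_cont.comp ((continuous_id.prodMk continuous_const).continuousOn)
      (fun x hx => ⟨hx, Set.mem_univ _⟩)
  have hΦc : ∀ σ, ContinuousOn (fun x => Φ x σ) (Set.Icc (0:ℝ) T) := fun σ =>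
    hΦ_cont.comp ((continuous_id.prodMk continuous_const).continuousOn)
      (fun x hx => ⟨hx, Set.mem_univ _⟩)
  -- scalar kernel measurability
  have hker : Measurable (fun x : ℝ => (t - x) ^ (α - 1)) :=
    (measurable_const.sub measurable_id).pow measurable_const
  have hker_nonneg : ∀ x ∈ Set.Ioc (0:ℝ) t, 0 ≤ (t - x) ^ (α - 1) :=
    fun x hx => Real.rpow_nonneg (by linarith [hx.2]) _
  -- the compact set for the bound
  have hKc : IsCompact (Set.Icc (0:ℝ) T ×ˢ Metric.closedBall ρ 1) :=
    isCompact_Icc.prod (isCompact_closedBall _ _)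
  have hKsub : Set.Icc (0:ℝ) T ×ˢ Metric.closedBall ρ 1 ⊆ Set.Icc 0 T ×ˢ Set.univ :=
    Set.prod_mono_right (Set.subset_univ _)
  have hcont1 : ContinuousOn
      (fun p : ℝ × (Fin m → ℝ) => ‖fderiv ℝ f (y p.1 p.2)‖ * ‖Φ p.1 p.2‖)
      (Set.Icc (0:ℝ) T ×ˢ Metric.closedBall ρ 1) :=
    ((hdf.comp_continuousOn (hy_cont.mono hKsub)).norm).mul ((hΦ_cont.mono hKsub).norm)
  obtain ⟨C, hC⟩ := hKc.exists_bound_of_continuousOn hcont1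
  -- integrability of the kernel
  have hrpow : IntervalIntegrable (fun x : ℝ => (t - x) ^ (α - 1)) volume 0 t := by
    have h : IntervalIntegrable (fun x : ℝ => x ^ (α - 1)) volume (t - t) (t - 0) := by
      apply intervalIntegral.intervalIntegrable_rpow' (by linarith)
    simpa using (h.comp_sub_left t).symm
  have hrpowOn : IntegrableOn (fun x : ℝ => (t - x) ^ (α - 1)) (Set.Ioc 0 t) volume :=
    (intervalIntegrable_iff_integrableOn_Ioc_of_le ht0).mp hrpow
  -- F and F'
  set c : ℝ := (Real.Gamma α)⁻¹ with hc
  set F : (Fin m → ℝ) → ℝ → (Fin m → ℝ) :=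
    fun σ x => ((t - x) ^ (α - 1)) • f (y x σ) with hF
  set F' : (Fin m → ℝ) → ℝ → ((Fin m → ℝ) →L[ℝ] (Fin m → ℝ)) :=
    fun σ x => ((t - x) ^ (α - 1)) • ((fderiv ℝ f (y x σ)).comp (Φ x σ)) with hF'
  -- measurability of F σ
  have hFmeas : ∀ σ, AEStronglyMeasurable (F σ) (volume.restrict (Set.uIoc (0:ℝ) t)) := by
    intro σ
    rw [huIoc]
    exact hker.aestronglyMeasurable.smul
      (((hf.continuous.comp_continuousOn (hyc σ)).mono hsub).aestronglyMeasurable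
        measurableSet_Ioc)
  -- integrability of F ρ
  have hFint : IntervalIntegrable (F ρ) volume 0 t := by
    obtain ⟨C1, hC1⟩ := isCompact_Icc.exists_bound_of_continuousOn
      (hf.continuous.comp_continuousOn (hyc ρ))
    rw [intervalIntegrable_iff_integrableOn_Ioc_of_le ht0]
    refine (hrpowOn.mul_const C1).mono' ?_ ?_
    · have := hFmeas ρ
      rwa [huIoc] at this
    · filter_upwards [ae_restrict_mem measurableSet_Ioc] with x hx
      have h1 : 0 ≤ (t - x) ^ (α - 1) := hker_nonneg x hx
      have h2 : ‖f (y x ρ)‖ ≤ C1 := hC1 x (hsub hx)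
      calc ‖F ρ x‖ = (t - x) ^ (α - 1) * ‖f (y x ρ)‖ := by
            rw [hF]; simp [norm_smul, abs_of_nonneg h1]
        _ ≤ (t - x) ^ (α - 1) * C1 := by
            exact mul_le_mul_of_nonneg_left h2 h1
  -- measurability of F' ρ
  have hF'meas : AEStronglyMeasurable (F' ρ) (volume.restrict (Set.uIoc (0:ℝ) t)) := by
    rw [huIoc]
    refine hker.aestronglyMeasurable.smul ?_
    exact (((hdf.comp_continuousOn (hyc ρ)).clm_comp (hΦc ρ)).mono hsub).aestronglyMeasurable
      measurableSet_Ioc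
  -- bound
  have h_bound : ∀ᵐ x ∂(volume : Measure ℝ), x ∈ Set.uIoc (0:ℝ) t →
      ∀ σ ∈ Metric.ball ρ 1, ‖F' σ x‖ ≤ (t - x) ^ (α - 1) * C := by
    filter_upwards with x hx σ hσ
    rw [huIoc] at hx
    have h1 : 0 ≤ (t - x) ^ (α - 1) := hker_nonneg x hx
    have hmem : (x, σ) ∈ Set.Icc (0:ℝ) T ×ˢ Metric.closedBall ρ 1 :=
      ⟨hsub hx, Metric.ball_subset_closedBall hσ⟩
    have h2 : ‖fderiv ℝ f (y x σ)‖ * ‖Φ x σ‖ ≤ C := by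
      have h := hC (x, σ) hmem
      rwa [Real.norm_eq_abs,
        abs_of_nonneg (mul_nonneg (norm_nonneg _) (norm_nonneg _))] at h
    have hFx : F' σ x = (t - x) ^ (α - 1) • ((fderiv ℝ f (y x σ)).comp (Φ x σ)) := rfl
    rw [hFx]
    calc ‖(t - x) ^ (α - 1) • ((fderiv ℝ f (y x σ)).comp (Φ x σ))‖ ≤ ‖(t - x) ^ (α - 1)‖ * ‖(fderiv ℝ f (y x σ)).comp (Φ x σ)‖ :=
          ContinuousLinearMap.opNorm_smul_le _ _
      _ = (t - x) ^ (α - 1) * ‖(fderiv ℝ f (y x σ)).comp (Φ x σ)‖ := by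
          rw [Real.norm_eq_abs, abs_of_nonneg h1]
      _ ≤ (t - x) ^ (α - 1) * (‖fderiv ℝ f (y x σ)‖ * ‖Φ x σ‖) :=
          mul_le_mul_of_nonneg_left (ContinuousLinearMap.opNorm_comp_le _ _) h1
      _ ≤ (t - x) ^ (α - 1) * C := mul_le_mul_of_nonneg_left h2 h1
  have hbound_int : IntervalIntegrable (fun x : ℝ => (t - x) ^ (α - 1) * C) volume 0 t :=
    hrpow.mul_const C
  -- differentiability
  have h_diff : ∀ᵐ x ∂(volume : Measure ℝ), x ∈ Set.uIoc (0:ℝ) t →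
      ∀ σ ∈ Metric.ball ρ 1, HasFDerivAt (fun σ => F σ x) (F' σ x) σ := by
    filter_upwards with x hx σ _
    rw [huIoc] at hx
    exact ((hfd (y x σ)).comp σ (hΦ x (hsub hx) σ)).const_smul ((t - x) ^ (α - 1))
  -- differentiation under the integral
  have hInt : HasFDerivAt (fun σ => ∫ x in (0:ℝ)..t, F σ x) (∫ x in (0:ℝ)..t, F' ρ x) ρ :=
    intervalIntegral.hasFDerivAt_integral_of_dominated_of_fderiv_le (Metric.ball_mem_nhds ρ one_pos)
      (Filter.Eventually.of_forall hFmeas) hFint hF'meas h_bound hbound_int h_diff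
  have hG : HasFDerivAt (fun σ => σ + c • ∫ x in (0:ℝ)..t, F σ x)
      (ContinuousLinearMap.id ℝ (Fin m → ℝ) + c • ∫ x in (0:ℝ)..t, F' ρ x) ρ :=
    (hasFDerivAt_id ρ).add (hInt.const_smul c)
  have hGy : (fun σ => y t σ) = fun σ => σ + c • ∫ x in (0:ℝ)..t, F σ x := by
    funext σ
    exact hy_eq t ht σ
  rw [← hGy] at hG
  exact (hΦ t ht ρ).unique hG
end

section
/- Let 0 < α < 1, T > 0, let A : [0,T] → ℝ^{m×m} and b : [0,T] → ℝ^m be continuous, and let ρ₀, ρ* ∈ ℝ^m. Suppose u, v : [0,T] → ℝ^m are continuous and satisfy u(t) = ρ₀ + (1/Γ(α)) ∫₀^t (t−x)^{α−1} (A(x)u(x) + b(x)) dx and v(t) = ρ* + (1/Γ(α)) ∫₀^t (t−x)^{α−1} (A(x)v(x) + b(x)) dx for all t ∈ [0,T], and that Φ : [0,T] → ℝ^{m×m} is continuous and satisfies Φ(t) = I + (1/Γ(α)) ∫₀^t (t−x)^{α−1} A(x) Φ(x) dx for all t ∈ [0,T]. Then u(t) − v(t) = Φ(t) (ρ₀ −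 ρ*) for every t ∈ [0,T]. -/
open MeasureTheory intervalIntegral

private lemma aux_integrableOn_smul {E : Type*} [NormedAddCommGroup E] [NormedSpace ℝ E]
    {f : ℝ → ℝ} {g : ℝ → E} {A K : Set ℝ} (hf : IntegrableOn f A volume)
    (hg : ContinuousOn g K) (hA : MeasurableSet A) (hK : IsCompact K) (hAK : A ⊆ K) :
    IntegrableOn (fun x => f x • g x) A volume := by
  rw [IntegrableOn, ← integrable_norm_iff]
  · simp_rw [norm_smul]
    exact IntegrableOn.mul_continuousOn_of_subset hf.norm (continuous_norm.comp_continuousOn hg) hA hK hAK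
  · exact (hf.1).smul (((hg.mono hAK)).aestronglyMeasurable hA)

private lemma aux_kernel_ii {α : ℝ} (hα : 0 < α) (t c d : ℝ) :
    IntervalIntegrable (fun x => (t - x) ^ (α - 1)) volume c d := by
  have h := (intervalIntegrable_rpow' (a := t - c) (b := t - d)
    (by linarith : (-1:ℝ) < α - 1)).comp_sub_left t
  simpa using h

private lemma aux_smul_ii {E : Type*} [NormedAddCommGroup E] [NormedSpace ℝ E]
    {α : ℝ} (hα : 0 < α) (t c d : ℝ) {g : ℝ → E} (hg : ContinuousOn g (Set.uIcc c d)) :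
    IntervalIntegrable (fun x => ((t - x) ^ (α - 1)) • g x) volume c d := by
  have hf := aux_kernel_ii hα t c d
  rw [intervalIntegrable_iff] at hf ⊢
  exact aux_integrableOn_smul hf hg measurableSet_uIoc isCompact_uIcc Set.uIoc_subset_uIcc

/-- For linear fractional problems, the difference of two solutions is the
fundamental matrix applied to the difference of the initial values. -/
theorem linear_fractional_solution_difference
    (m : ℕ) (α T : ℝ) (hα0 : 0 < α) (hα1 : α < 1) (hT : 0 < T)
    (A : ℝ → ((Fin m → ℝ) →L[ℝ] (Fin m → ℝ)))
    (hA : ContinuousOn A (Set.Icc 0 T))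
    (b : ℝ → (Fin m → ℝ)) (hb : ContinuousOn b (Set.Icc 0 T))
    (ρ0 ρstar : Fin m → ℝ)
    (u v : ℝ → (Fin m → ℝ))
    (hu_cont : ContinuousOn u (Set.Icc 0 T))
    (hv_cont : ContinuousOn v (Set.Icc 0 T))
    (hu : ∀ t ∈ Set.Icc (0:ℝ) T,
      u t = ρ0 + (Real.Gamma α)⁻¹ •
        ∫ x in (0:ℝ)..t, ((t - x) ^ (α - 1)) • (A x (u x) + b x))
    (hv : ∀ t ∈ Set.Icc (0:ℝ) T,
      v t = ρstar + (Real.Gamma α)⁻¹ •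
        ∫ x in (0:ℝ)..t, ((t - x) ^ (α - 1)) • (A x (v x) + b x))
    (Φ : ℝ → ((Fin m → ℝ) →L[ℝ] (Fin m → ℝ)))
    (hΦ_cont : ContinuousOn Φ (Set.Icc 0 T))
    (hΦ : ∀ t ∈ Set.Icc (0:ℝ) T,
      Φ t = ContinuousLinearMap.id ℝ (Fin m → ℝ) + (Real.Gamma α)⁻¹ •
        ∫ x in (0:ℝ)..t, ((t - x) ^ (α - 1)) • ((A x).comp (Φ x))) :
    ∀ t ∈ Set.Icc (0:ℝ) T, u t - v t = Φ t (ρ0 - ρstar) := by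
  have hΓ : 0 < Real.Gamma α := Real.Gamma_pos_of_pos hα0
  set y : Fin m → ℝ := ρ0 - ρstar with hy
  set w : ℝ → (Fin m → ℝ) := fun t => u t - v t - Φ t y with hwdef
  have hw_cont : ContinuousOn w (Set.Icc 0 T) :=
    (hu_cont.sub hv_cont).sub (hΦ_cont.clm_apply continuousOn_const)
  have hAw_cont : ContinuousOn (fun x => A x (w x)) (Set.Icc 0 T) := hA.clm_apply hw_cont
  have hsub : ∀ t ∈ Set.Icc (0:ℝ) T, Set.uIcc 0 t ⊆ Set.Icc 0 T := by
    intro t ht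
    rw [Set.uIcc_of_le ht.1]
    exact Set.Icc_subset_Icc le_rfl ht.2
  -- Step 1: the integral equation for w
  have hw : ∀ t ∈ Set.Icc (0:ℝ) T, w t = (Real.Gamma α)⁻¹ •
      ∫ x in (0:ℝ)..t, ((t - x) ^ (α - 1)) • (A x (w x)) := by
    intro t ht
    have hsubt := hsub t ht
    have iu : IntervalIntegrable (fun x => ((t - x) ^ (α - 1)) • (A x (u x) + b x)) volume 0 t :=
      aux_smul_ii hα0 t 0 t (((hA.clm_apply hu_cont).add hb).mono hsubt)
    have iv : IntervalIntegrable (fun x => ((t - x) ^ (α - 1)) • (A x (v x) + b x)) volume 0 t :=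
      aux_smul_ii hα0 t 0 t (((hA.clm_apply hv_cont).add hb).mono hsubt)
    have iΦ : IntervalIntegrable (fun x => ((t - x) ^ (α - 1)) • ((A x).comp (Φ x))) volume 0 t :=
      aux_smul_ii hα0 t 0 t ((hA.clm_comp hΦ_cont).mono hsubt)
    have iuv : IntervalIntegrable
        (fun x => ((t - x) ^ (α - 1)) • (A x (u x) - A x (v x))) volume 0 t :=
      aux_smul_ii hα0 t 0 t
        (((hA.clm_apply hu_cont).sub (hA.clm_apply hv_cont)).mono hsubt)
    have iΦy : IntervalIntegrable
        (fun x => ((t - x) ^ (α - 1)) • (A x (Φ x y))) volume 0 t :=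
      aux_smul_ii hα0 t 0 t
        ((hA.clm_apply (hΦ_cont.clm_apply continuousOn_const)).mono hsubt)
    have h1 : u t - v t = y + (Real.Gamma α)⁻¹ •
        ∫ x in (0:ℝ)..t, ((t - x) ^ (α - 1)) • (A x (u x) - A x (v x)) := by
      rw [hu t ht, hv t ht]
      have hI : (∫ x in (0:ℝ)..t, ((t - x) ^ (α - 1)) • (A x (u x) - A x (v x)))
          = (∫ x in (0:ℝ)..t, ((t - x) ^ (α - 1)) • (A x (u x) + b x))
            - ∫ x in (0:ℝ)..t, ((t - x) ^ (α - 1)) • (A x (v x) + b x) := by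
        rw [← integral_sub iu iv]
        apply integral_congr
        intro x _
        dsimp only
        rw [← smul_sub, add_sub_add_right_eq_sub]
      rw [hI, smul_sub, hy]
      abel
    have h2 : Φ t y = y + (Real.Gamma α)⁻¹ •
        ∫ x in (0:ℝ)..t, ((t - x) ^ (α - 1)) • (A x (Φ x y)) := by
      conv_lhs => rw [hΦ t ht]
      rw [ContinuousLinearMap.add_apply, ContinuousLinearMap.smul_apply,
        ContinuousLinearMap.id_apply, ContinuousLinearMap.intervalIntegral_apply iΦ y]
      have happ : ∀ x : ℝ, (((t - x) ^ (α - 1)) • ((A x).comp (Φ x))) y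
          = ((t - x) ^ (α - 1)) • (A x ((Φ x) y)) := fun x => by simp
      simp_rw [happ]
    show u t - v t - Φ t y = _
    rw [h1, h2]
    have hI2 : (∫ x in (0:ℝ)..t, ((t - x) ^ (α - 1)) • (A x (w x)))
        = (∫ x in (0:ℝ)..t, ((t - x) ^ (α - 1)) • (A x (u x) - A x (v x)))
          - ∫ x in (0:ℝ)..t, ((t - x) ^ (α - 1)) • (A x (Φ x y)) := by
      rw [← integral_sub iuv iΦy]
      apply integral_congr
      intro x _
      dsimp only
      rw [← smul_sub, ← map_sub, ← map_sub]
    rw [hI2, smul_sub]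
    abel
  -- Step 2: constants
  obtain ⟨M0, hM0⟩ := isCompact_Icc.exists_bound_of_continuousOn hA
  set M := max M0 1 with hM
  have hM1 : (0:ℝ) < M := lt_of_lt_of_le one_pos (le_max_right _ _)
  have hMA : ∀ x ∈ Set.Icc (0:ℝ) T, ‖A x‖ ≤ M := fun x hx => (hM0 x hx).trans (le_max_left _ _)
  set δ := (α * Real.Gamma α / (2 * M)) ^ (1/α) with hδdef
  have hbase : 0 < α * Real.Gamma α / (2 * M) := by positivity
  have hδ : 0 < δ := Real.rpow_pos_of_pos hbase _
  have hδα : δ ^ α = α * Real.Gamma α / (2 * M) := by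
    rw [hδdef, ← Real.rpow_mul hbase.le, one_div, inv_mul_cancel₀ (ne_of_gt hα0), Real.rpow_one]
  have hq : M * δ ^ α / (α * Real.Gamma α) = 1/2 := by
    rw [hδα]
    field_simp
  -- Step 3: induction
  have key : ∀ n : ℕ, ∀ t ∈ Set.Icc (0:ℝ) (min ((n:ℝ) * δ) T), w t = 0 := by
    intro n
    induction n with
    | zero =>
      intro t ht
      have htz : t = 0 := by
        have h2 := ht.2
        simp only [Nat.cast_zero, zero_mul] at h2
        have : t ≤ 0 := h2.trans (min_le_left _ _)
        linarith [ht.1]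
      subst htz
      rw [hw 0 ⟨le_rfl, hT.le⟩, integral_same, smul_zero]
    | succ n ih =>
      intro t htc
      set s := min ((n:ℝ) * δ) T with hsdef
      set c := min (((n:ℝ) + 1) * δ) T with hcdef
      have htc' : t ∈ Set.Icc (0:ℝ) c := by
        refine ⟨htc.1, ?_⟩
        have := htc.2
        push_cast at this
        exact this
      have hc_le : c ≤ T := min_le_right _ _
      have hc0 : (0:ℝ) ≤ c := le_min (by positivity) hT.le
      have hs0 : (0:ℝ) ≤ s := le_min (by positivity) hT.le
      obtain ⟨t0, ht0mem, hmax⟩ := isCompact_Icc.exists_isMaxOn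
        (Set.nonempty_Icc.2 hc0)
        ((hw_cont.norm).mono (Set.Icc_subset_Icc le_rfl hc_le))
      set S := ‖w t0‖ with hSdef
      suffices hS : S = 0 by
        have h2 : ‖w t‖ ≤ ‖w t0‖ := hmax htc'
        rw [← hSdef, hS] at h2
        exact norm_le_zero_iff.mp h2
      rcases le_or_gt t0 s with hcase | hcase
      · rw [hSdef, ih t0 ⟨ht0mem.1, hcase⟩, norm_zero]
      · have hnδT : (n:ℝ) * δ < T := by
          by_contra hle
          push_neg at hle
          have hsT : s = T := min_eq_right hle
          have : t0 ≤ s := by rw [hsT]; exact ht0mem.2.trans hc_le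
          linarith
        have hs_eq : s = (n:ℝ) * δ := min_eq_left hnδT.le
        have ht0T : t0 ≤ T := ht0mem.2.trans hc_le
        have ht0c : t0 ≤ c := ht0mem.2
        have hts : t0 - s ≤ δ := by
          have hcb : c ≤ ((n:ℝ) + 1) * δ := min_le_left _ _
          rw [hs_eq]
          nlinarith
        have ht00 : (0:ℝ) ≤ t0 := hs0.trans hcase.le
        have heq := hw t0 ⟨ht00, ht0T⟩
        have hsubl : Set.uIcc (0:ℝ) s ⊆ Set.Icc 0 T := by
          rw [Set.uIcc_of_le hs0]
          exact Set.Icc_subset_Icc le_rfl (min_le_right _ _)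
        have hsubr : Set.uIcc s t0 ⊆ Set.Icc 0 T := by
          rw [Set.uIcc_of_le hcase.le]
          exact Set.Icc_subset_Icc hs0 ht0T
        have i1 : IntervalIntegrable (fun x => ((t0 - x) ^ (α - 1)) • (A x (w x))) volume 0 s :=
          aux_smul_ii hα0 t0 0 s (hAw_cont.mono hsubl)
        have i2 : IntervalIntegrable (fun x => ((t0 - x) ^ (α - 1)) • (A x (w x))) volume s t0 :=
          aux_smul_ii hα0 t0 s t0 (hAw_cont.mono hsubr)
        have hsplit : (∫ x in (0:ℝ)..t0, ((t0 - x) ^ (α - 1)) • (A x (w x)))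
            = (∫ x in (0:ℝ)..s, ((t0 - x) ^ (α - 1)) • (A x (w x)))
              + ∫ x in s..t0, ((t0 - x) ^ (α - 1)) • (A x (w x)) :=
          (integral_add_adjacent_intervals i1 i2).symm
        have hzero : (∫ x in (0:ℝ)..s, ((t0 - x) ^ (α - 1)) • (A x (w x))) = 0 := by
          have heqon : Set.EqOn (fun x => ((t0 - x) ^ (α - 1)) • (A x (w x)))
              (fun _ => (0 : Fin m → ℝ)) (Set.uIcc 0 s) := by
            intro x hx
            rw [Set.uIcc_of_le hs0] at hx
            dsimp only
            rw [ih x hx, map_zero, smul_zero]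
          rw [integral_congr heqon, intervalIntegral.integral_zero]
        have hb1 : ‖∫ x in s..t0, ((t0 - x) ^ (α - 1)) • (A x (w x))‖
            ≤ |∫ x in s..t0, (t0 - x) ^ (α - 1) * (M * S)| := by
          apply intervalIntegral.norm_integral_le_abs_of_norm_le
          · refine (ae_restrict_mem measurableSet_uIoc).mono (fun x hx => ?_)
            rw [Set.uIoc_of_le hcase.le] at hx
            have hx0 : (0:ℝ) ≤ t0 - x := by linarith [hx.2]
            rw [norm_smul, Real.norm_eq_abs, abs_of_nonneg (Real.rpow_nonneg hx0 _)]
            refine mul_le_mul_of_nonneg_left ?_ (Real.rpow_nonneg hx0 _)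
            calc ‖A x (w x)‖ ≤ ‖A x‖ * ‖w x‖ := (A x).le_opNorm _
              _ ≤ M * S := mul_le_mul
                  (hMA x ⟨hs0.trans hx.1.le, hx.2.trans ht0T⟩)
                  (hmax (⟨hs0.trans hx.1.le, hx.2.trans ht0c⟩ : x ∈ Set.Icc 0 c))
                  (norm_nonneg _) hM1.le
          · exact (aux_kernel_ii hα0 t0 s t0).mul_const _
        have hval : (∫ x in s..t0, (t0 - x) ^ (α - 1) * (M * S))
            = (t0 - s) ^ α / α * (M * S) := by
          rw [intervalIntegral.integral_mul_const]
          congr 1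
          have hcs := integral_comp_sub_left (a := s) (b := t0) (fun y => y ^ (α - 1)) t0
          rw [hcs, sub_self, integral_rpow (Or.inl (by linarith : (-1:ℝ) < α - 1))]
          rw [sub_add_cancel, Real.zero_rpow (ne_of_gt hα0)]
          ring
        have hSnn : 0 ≤ S := norm_nonneg _
        have hvnn : 0 ≤ (t0 - s) ^ α / α * (M * S) := by
          have := Real.rpow_nonneg (sub_nonneg.2 hcase.le) α
          positivity
        have hSle : S ≤ (Real.Gamma α)⁻¹ * ((t0 - s) ^ α / α * (M * S)) := by
          calc S = ‖(Real.Gamma α)⁻¹ • (∫ x in (0:ℝ)..t0, ((t0 - x) ^ (α - 1)) • (A x (w x)))‖ := by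
                rw [hSdef, heq]
            _ = (Real.Gamma α)⁻¹ * ‖∫ x in (0:ℝ)..t0, ((t0 - x) ^ (α - 1)) • (A x (w x))‖ := by
                rw [norm_smul, Real.norm_eq_abs, abs_of_pos (inv_pos.2 hΓ)]
            _ ≤ (Real.Gamma α)⁻¹ * ((t0 - s) ^ α / α * (M * S)) := by
                apply mul_le_mul_of_nonneg_left _ (inv_pos.2 hΓ).le
                rw [hsplit, hzero, zero_add]
                refine hb1.trans ?_
                rw [hval, abs_of_nonneg hvnn]
        have hhalf : S ≤ 1/2 * S := by
          have hmono : (t0 - s) ^ α ≤ δ ^ α :=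
            Real.rpow_le_rpow (sub_nonneg.2 hcase.le) hts hα0.le
          have step : (Real.Gamma α)⁻¹ * ((t0 - s) ^ α / α * (M * S))
              ≤ (Real.Gamma α)⁻¹ * (δ ^ α / α * (M * S)) := by
            have hMS : 0 ≤ M * S := by positivity
            gcongr
          have heq2 : (Real.Gamma α)⁻¹ * (δ ^ α / α * (M * S))
              = (M * δ ^ α / (α * Real.Gamma α)) * S := by
            field_simp
          calc S ≤ (Real.Gamma α)⁻¹ * ((t0 - s) ^ α / α * (M * S)) := hSle
            _ ≤ (Real.Gamma α)⁻¹ * (δ ^ α / α * (M * S)) := step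
            _ = (M * δ ^ α / (α * Real.Gamma α)) * S := heq2
            _ = 1/2 * S := by rw [hq]
        linarith
  -- conclusion
  intro t ht
  obtain ⟨n, hn⟩ := exists_nat_ge (T / δ)
  have hTn : T ≤ (n:ℝ) * δ := by
    rw [div_le_iff₀ hδ] at hn
    linarith
  have hw0 : w t = 0 := key n t (by rw [min_eq_right hTn]; exact ht)
  exact sub_eq_zero.mp hw0
end

section
/- Let 0 < α < 1, T > 0, let A : [0,T] → ℝ^{m×m} and b : [0,T] → ℝ^m be continuous, and let ρ₀, ρ* ∈ ℝ^m. Suppose u, v : [0,T] → ℝ^m are continuous and satisfy u(t) = ρ₀ + (1/Γ(α)) ∫₀^t (t−x)^{α−1} (A(x)u(x) + b(x)) dx and v(t) = ρ* + (1/Γ(α)) ∫₀^t (t−x)^{α−1} (A(x)v(x) + b(x)) dx for all t ∈ [0,T], that Φ : [0,T] → ℝ^{m×m} is continuous and satisfies Φ(t) = I + (1/Γ(α)) ∫₀^t (t−x)^{α−1} A(x) Φ(x) dx for all t ∈ [0,T], and that Φ(T) is invertible. Set η = v(T). Then ρ₀ − Φ(T)⁻¹ (u(T) − η) = ρ*;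 that is, the shooting-Newton iteration for the linear fractional terminal value problem y^{(α)} = A(t)y + b(t), y(T) = η, converges in exactly one iteration from any starting value ρ₀. -/
open MeasureTheory intervalIntegral

/-- Integrability of a singular kernel times a continuous function. -/
lemma kerInt {E : Type*} [NormedAddCommGroup E] [NormedSpace ℝ E]
    {α T : ℝ} (hα0 : 0 < α) {g : ℝ → E} (hg : ContinuousOn g (Set.Icc 0 T))
    {s t c : ℝ} (hs : 0 ≤ s) (hst : s ≤ t) (htT : t ≤ T) (htc : t ≤ c) :
    IntervalIntegrable (fun x => ((c - x) ^ (α - 1)) • g x) volume s t := by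
  have hker : IntervalIntegrable (fun x => (c - x) ^ (α - 1)) volume s t := by
    have h0 : IntervalIntegrable (fun y : ℝ => y ^ (α - 1)) volume (c - t) (c - s) :=
      intervalIntegrable_rpow' (by linarith)
    simpa using (h0.comp_sub_left c).symm
  rw [intervalIntegrable_iff_integrableOn_Ioc_of_le hst] at hker ⊢
  have hsub : Set.Ioc s t ⊆ Set.Icc 0 T := fun x hx => ⟨hs.trans hx.1.le, hx.2.trans htT⟩
  obtain ⟨C, hC⟩ := isCompact_Icc.exists_bound_of_continuousOn hg
  exact hker.smul_of_top_left
    (memLp_top_of_bound ((hg.mono hsub).aestronglyMeasurable measurableSet_Ioc) C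
      (ae_restrict_of_forall_mem measurableSet_Ioc fun x hx => hC x (hsub hx)))

lemma kerVal {α : ℝ} (hα0 : 0 < α) {s t : ℝ} (hst : s ≤ t) :
    ∫ x in s..t, (t - x) ^ (α - 1) = (t - s) ^ α / α := by
  have := intervalIntegral.integral_comp_sub_left (a := s) (b := t)
    (fun y : ℝ => y ^ (α - 1)) t
  rw [this, sub_self]
  rw [integral_rpow (Or.inl (by linarith))]
  rw [Real.zero_rpow (by linarith : α - 1 + 1 ≠ 0)]
  simp [sub_add_cancel]

/-- For linear fractional terminal value problems, the shooting-Newton iteration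
converges in exactly one iteration, from any starting value. -/
theorem linear_fractional_shooting_newton_one_step
    (m : ℕ) (α T : ℝ) (hα0 : 0 < α) (hα1 : α < 1) (hT : 0 < T)
    (A : ℝ → ((Fin m → ℝ) →L[ℝ] (Fin m → ℝ)))
    (hA : ContinuousOn A (Set.Icc 0 T))
    (b : ℝ → (Fin m → ℝ)) (hb : ContinuousOn b (Set.Icc 0 T))
    (ρ0 ρstar : Fin m → ℝ)
    (u v : ℝ → (Fin m → ℝ))
    (hu_cont : ContinuousOn u (Set.Icc 0 T))
    (hv_cont : ContinuousOn v (Set.Icc 0 T))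
    (hu : ∀ t ∈ Set.Icc (0:ℝ) T,
      u t = ρ0 + (Real.Gamma α)⁻¹ •
        ∫ x in (0:ℝ)..t, ((t - x) ^ (α - 1)) • (A x (u x) + b x))
    (hv : ∀ t ∈ Set.Icc (0:ℝ) T,
      v t = ρstar + (Real.Gamma α)⁻¹ •
        ∫ x in (0:ℝ)..t, ((t - x) ^ (α - 1)) • (A x (v x) + b x))
    (Φ : ℝ → ((Fin m → ℝ) →L[ℝ] (Fin m → ℝ)))
    (hΦ_cont : ContinuousOn Φ (Set.Icc 0 T))
    (hΦ : ∀ t ∈ Set.Icc (0:ℝ) T,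
      Φ t = ContinuousLinearMap.id ℝ (Fin m → ℝ) + (Real.Gamma α)⁻¹ •
        ∫ x in (0:ℝ)..t, ((t - x) ^ (α - 1)) • ((A x).comp (Φ x)))
    (Φinv : (Fin m → ℝ) →L[ℝ] (Fin m → ℝ))
    (hinv : Φinv.comp (Φ T) = ContinuousLinearMap.id ℝ (Fin m → ℝ) ∧
      (Φ T).comp Φinv = ContinuousLinearMap.id ℝ (Fin m → ℝ))
    (η : Fin m → ℝ) (hη : η = v T) :
    ρ0 - Φinv (u T - η) = ρstar := by
  have hΓ : 0 < Real.Gamma α := Real.Gamma_pos_of_pos hα0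
  set Γi : ℝ := (Real.Gamma α)⁻¹ with hΓidef
  have hΓi : 0 ≤ Γi := inv_nonneg.2 hΓ.le
  set w : Fin m → ℝ := ρ0 - ρstar with hwdef
  set z : ℝ → (Fin m → ℝ) := fun t => u t - v t - Φ t w with hzdef
  -- continuity facts
  have hΦw_cont : ContinuousOn (fun t => Φ t w) (Set.Icc 0 T) :=
    hΦ_cont.clm_apply continuousOn_const
  have hz_cont : ContinuousOn z (Set.Icc 0 T) :=
    (hu_cont.sub hv_cont).sub hΦw_cont
  have hgu : ContinuousOn (fun x => A x (u x) + b x) (Set.Icc 0 T) :=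
    (hA.clm_apply hu_cont).add hb
  have hgv : ContinuousOn (fun x => A x (v x) + b x) (Set.Icc 0 T) :=
    (hA.clm_apply hv_cont).add hb
  have hgΦ : ContinuousOn (fun x => (A x).comp (Φ x)) (Set.Icc 0 T) :=
    hA.clm_comp hΦ_cont
  have hgΦw : ContinuousOn (fun x => A x (Φ x w)) (Set.Icc 0 T) :=
    hA.clm_apply hΦw_cont
  have hgz : ContinuousOn (fun x => A x (z x)) (Set.Icc 0 T) :=
    hA.clm_apply hz_cont
  -- the integral equation for z
  have hzeq : ∀ t ∈ Set.Icc (0:ℝ) T,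
      z t = Γi • ∫ x in (0:ℝ)..t, ((t - x) ^ (α - 1)) • (A x (z x)) := by
    intro t ht
    have hΦt : Φ t w = w + Γi • ∫ x in (0:ℝ)..t, ((t - x) ^ (α - 1)) • (A x (Φ x w)) := by
      have h3 := hΦ t ht
      have happ : (∫ x in (0:ℝ)..t, ((t - x) ^ (α - 1)) • ((A x).comp (Φ x))) w
          = ∫ x in (0:ℝ)..t, ((t - x) ^ (α - 1)) • (A x (Φ x w)) := by
        have hint : IntervalIntegrable
            (fun x => ((t - x) ^ (α - 1)) • ((A x).comp (Φ x))) volume 0 t :=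
          kerInt hα0 hgΦ le_rfl ht.1 ht.2 le_rfl
        rw [intervalIntegral.integral_of_le ht.1,
          intervalIntegral.integral_of_le ht.1] at *
        rw [ContinuousLinearMap.integral_apply
          ((intervalIntegrable_iff_integrableOn_Ioc_of_le ht.1).mp hint)]
        simp [ContinuousLinearMap.smul_apply]
      calc Φ t w = (ContinuousLinearMap.id ℝ (Fin m → ℝ) + Γi •
            ∫ x in (0:ℝ)..t, ((t - x) ^ (α - 1)) • ((A x).comp (Φ x))) w := by rw [← h3]
        _ = w + Γi • ((∫ x in (0:ℝ)..t, ((t - x) ^ (α - 1)) • ((A x).comp (Φ x))) w) := by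
            simp [ContinuousLinearMap.add_apply]
        _ = _ := by rw [happ]
    have iu : IntervalIntegrable (fun x => ((t - x) ^ (α - 1)) • (A x (u x) + b x)) volume 0 t :=
      kerInt hα0 hgu le_rfl ht.1 ht.2 le_rfl
    have iv : IntervalIntegrable (fun x => ((t - x) ^ (α - 1)) • (A x (v x) + b x)) volume 0 t :=
      kerInt hα0 hgv le_rfl ht.1 ht.2 le_rfl
    have iΦ : IntervalIntegrable (fun x => ((t - x) ^ (α - 1)) • (A x (Φ x w))) volume 0 t :=
      kerInt hα0 hgΦw le_rfl ht.1 ht.2 le_rfl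
    have key : (∫ x in (0:ℝ)..t, ((t - x) ^ (α - 1)) • (A x (u x) + b x))
        - (∫ x in (0:ℝ)..t, ((t - x) ^ (α - 1)) • (A x (v x) + b x))
        - (∫ x in (0:ℝ)..t, ((t - x) ^ (α - 1)) • (A x (Φ x w)))
        = ∫ x in (0:ℝ)..t, ((t - x) ^ (α - 1)) • (A x (z x)) := by
      rw [← intervalIntegral.integral_sub iu iv,
        ← intervalIntegral.integral_sub (iu.sub iv) iΦ]
      apply intervalIntegral.integral_congr
      intro x hx
      simp only [hzdef, ← smul_sub, map_sub]
      congr 1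
      abel
    show u t - v t - Φ t w = _
    rw [hu t ht, hv t ht, hΦt, ← key, hwdef]
    simp only [smul_sub]
    abel
  -- bound on A
  obtain ⟨K, hK⟩ := isCompact_Icc.exists_bound_of_continuousOn hA
  have hK0 : 0 ≤ K := (norm_nonneg (A 0)).trans (hK 0 ⟨le_rfl, hT.le⟩)
  -- choice of δ
  set c0 : ℝ := Γi * K / α with hc0def
  have hc0 : 0 ≤ c0 := by positivity
  obtain ⟨δ, hδpos, hδ⟩ : ∃ δ : ℝ, 0 < δ ∧ c0 * δ ^ α ≤ 1 / 2 := by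
    rcases eq_or_lt_of_le hc0 with h | h
    · exact ⟨1, one_pos, by rw [← h]; norm_num⟩
    · refine ⟨((2 * c0)⁻¹) ^ α⁻¹, Real.rpow_pos_of_pos (by positivity) _, ?_⟩
      rw [Real.rpow_inv_rpow (by positivity) (ne_of_gt hα0)]
      rw [mul_inv, ← mul_assoc]
      rw [mul_comm c0, mul_assoc, mul_inv_cancel₀ (ne_of_gt h)]
      norm_num
  -- the key propagation step
  have step : ∀ s t' : ℝ, 0 ≤ s → s ≤ t' → t' ≤ T → t' ≤ s + δ →
      (∀ x ∈ Set.Icc 0 s, z x = 0) → ∀ x ∈ Set.Icc (0:ℝ) t', z x = 0 := by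
    intro s t' hs hst' ht'T ht'δ hzs
    obtain ⟨τ0, hτ0mem, hτ0max⟩ := isCompact_Icc.exists_isMaxOn
      ⟨0, le_rfl, hs.trans hst'⟩
      ((hz_cont.mono (Set.Icc_subset_Icc le_rfl ht'T)).norm)
    set M : ℝ := ‖z τ0‖ with hMdef
    have hM0 : 0 ≤ M := norm_nonneg _
    have hMb : ∀ x ∈ Set.Icc (0:ℝ) t', ‖z x‖ ≤ M := fun x hx => hτ0max hx
    have claim : ∀ τ ∈ Set.Icc s t', ‖z τ‖ ≤ M / 2 := by
      intro τ hτ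
      have hτT : τ ∈ Set.Icc (0:ℝ) T := ⟨hs.trans hτ.1, hτ.2.trans ht'T⟩
      have i1 : IntervalIntegrable (fun x => ((τ - x) ^ (α - 1)) • (A x (z x))) volume 0 s :=
        kerInt hα0 hgz le_rfl hs (hst'.trans ht'T) hτ.1
      have i2 : IntervalIntegrable (fun x => ((τ - x) ^ (α - 1)) • (A x (z x))) volume s τ :=
        kerInt hα0 hgz hs hτ.1 hτT.2 le_rfl
      have hsplit : (∫ x in (0:ℝ)..τ, ((τ - x) ^ (α - 1)) • (A x (z x)))
          = ∫ x in s..τ, ((τ - x) ^ (α - 1)) • (A x (z x)) := by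
        rw [← intervalIntegral.integral_add_adjacent_intervals i1 i2]
        have h0 : (∫ x in (0:ℝ)..s, ((τ - x) ^ (α - 1)) • (A x (z x))) = 0 := by
          rw [intervalIntegral.integral_congr (g := fun _ => (0 : Fin m → ℝ))
            (fun x hx => by
              rw [Set.uIcc_of_le hs] at hx
              rw [hzs x hx]; simp)]
          simp
        rw [h0, zero_add]
      have hker : IntervalIntegrable (fun x => (τ - x) ^ (α - 1)) volume s τ := by
        have h0 : IntervalIntegrable (fun y : ℝ => y ^ (α - 1)) volume 0 (τ - s) :=
          intervalIntegrable_rpow' (by linarith)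
        simpa using (h0.comp_sub_left τ).symm
      have hKM : 0 ≤ K * M := by positivity
      have hnorm_le : (∫ x in s..τ, ‖((τ - x) ^ (α - 1)) • (A x (z x))‖)
          ≤ ∫ x in s..τ, ((τ - x) ^ (α - 1)) * (K * M) := by
        apply intervalIntegral.integral_mono_on hτ.1 i2.norm (hker.mul_const _)
        intro x hx
        have hxτ : 0 ≤ τ - x := by linarith [hx.2]
        have hxT : x ∈ Set.Icc (0:ℝ) T := ⟨hs.trans hx.1, hx.2.trans hτT.2⟩
        have hxt' : x ∈ Set.Icc (0:ℝ) t' := ⟨hs.trans hx.1, hx.2.trans hτ.2⟩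
        rw [norm_smul, Real.norm_eq_abs, abs_of_nonneg (Real.rpow_nonneg hxτ _)]
        apply mul_le_mul_of_nonneg_left _ (Real.rpow_nonneg hxτ _)
        calc ‖A x (z x)‖ ≤ ‖A x‖ * ‖z x‖ := (A x).le_opNorm _
          _ ≤ K * M := mul_le_mul (hK x hxT) (hMb x hxt') (norm_nonneg _) hK0
      have hval : (∫ x in s..τ, ((τ - x) ^ (α - 1)) * (K * M))
          = ((τ - s) ^ α / α) * (K * M) := by
        rw [intervalIntegral.integral_mul_const, kerVal hα0 hτ.1]
      have hle : ‖z τ‖ ≤ Γi * (((τ - s) ^ α / α) * (K * M)) := by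
        rw [hzeq τ hτT, hsplit, norm_smul, Real.norm_eq_abs, abs_of_nonneg hΓi]
        exact mul_le_mul_of_nonneg_left
          ((intervalIntegral.norm_integral_le_integral_norm hτ.1).trans
            (hnorm_le.trans_eq hval)) hΓi
      have hpow : (τ - s) ^ α ≤ δ ^ α :=
        Real.rpow_le_rpow (by linarith [hτ.1]) (by linarith [hτ.2, ht'δ]) hα0.le
      calc ‖z τ‖ ≤ Γi * (((τ - s) ^ α / α) * (K * M)) := hle
        _ = M * (Γi * K / α * (τ - s) ^ α) := by ring
        _ ≤ M * (Γi * K / α * δ ^ α) := by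
            apply mul_le_mul_of_nonneg_left _ hM0
            apply mul_le_mul_of_nonneg_left hpow (by positivity)
        _ ≤ M * (1 / 2) := mul_le_mul_of_nonneg_left hδ hM0
        _ = M / 2 := by ring
    have hMzero : M = 0 := by
      rcases le_total τ0 s with h | h
      · simp [hMdef, hzs τ0 ⟨hτ0mem.1, h⟩]
      · have := claim τ0 ⟨h, hτ0mem.2⟩
        have : M ≤ M / 2 := this
        linarith
    intro x hx
    have := hMb x hx
    rw [hMzero] at this
    exact norm_le_zero_iff.mp this
  -- induction along the grid
  have hn : ∀ n : ℕ, ∀ x ∈ Set.Icc (0:ℝ) (min (n * δ) T), z x = 0 := by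
    intro n
    induction n with
    | zero =>
      intro x hx
      simp only [Nat.cast_zero, zero_mul, min_eq_left hT.le] at hx
      have hx0 : x = 0 := le_antisymm hx.2 hx.1
      have := hzeq 0 ⟨le_rfl, hT.le⟩
      simpa [hx0] using this
    | succ n ih =>
      have h1 : (0:ℝ) ≤ min (n * δ) T := le_min (by positivity) hT.le
      have h2 : min ((n:ℝ) * δ) T ≤ min (((n:ℝ) + 1) * δ) T := by
        apply min_le_min _ le_rfl
        nlinarith [hδpos.le]
      have h3 : min (((n:ℝ) + 1) * δ) T ≤ min ((n:ℝ) * δ) T + δ := by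
        rcases le_total ((n:ℝ) * δ) T with h | h
        · rw [min_eq_left h]
          calc min (((n:ℝ) + 1) * δ) T ≤ ((n:ℝ) + 1) * δ := min_le_left _ _
            _ = (n:ℝ) * δ + δ := by ring
        · rw [min_eq_right h]
          calc min (((n:ℝ) + 1) * δ) T ≤ T := min_le_right _ _
            _ ≤ T + δ := by linarith
      have := step (min ((n:ℝ) * δ) T) (min (((n:ℝ) + 1) * δ) T)
        h1 h2 (min_le_right _ _) h3 ih
      intro x hx
      apply this x
      simpa [Nat.cast_add, Nat.cast_one] using hx
  -- conclude z T = 0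
  have hzT : z T = 0 := by
    obtain ⟨n, hnδ⟩ := exists_nat_ge (T / δ)
    have hTn : T ≤ (n:ℝ) * δ := by
      rw [div_le_iff₀ hδpos] at hnδ
      linarith
    have := hn n T ⟨hT.le, by rw [min_eq_right hTn]⟩
    exact this
  -- final algebra
  have hUV : u T - v T = Φ T w := by
    have : u T - v T - Φ T w = 0 := hzT
    linear_combination (norm := module) this
  rw [hη, hUV]
  have : Φinv (Φ T w) = w := by
    have := congrArg (fun L => L w) hinv.1
    simpa using this
  rw [this, hwdef]
  abel
end

section
/- Let 0 < α, let L be a real m×m matrix, and for t ≥ 0 define the series E(t) = Σ_{j≥0} t^{αj} L^j / Γ(αj+1). Then for every t ≥ 0 the series is absolutely summable in the space of m×m real matrices, and the resulting function E satisfies, for every t ≥ 0, the integral equation E(t) = I + (1/Γ(α)) ∫₀^t (t−x)^{α−1} L·E(x) dx. -/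
open MeasureTheory intervalIntegral Real Set


lemma gamma_convex_lb {β : ℝ} (hβ0 : 0 < β) (hβ1 : β ≤ 1) {y : ℝ} (hy : 2 ≤ y) :
    Real.Gamma y * (y + β - 1) ^ β ≤ Real.Gamma (y + β) := by
  have h1 : (0:ℝ) < y + β - 1 := by linarith
  have h2 : (0:ℝ) < y := by linarith
  have h3 : (0:ℝ) < y + β := by linarith
  have hconv := Real.convexOn_log_Gamma.2 (mem_Ioi.2 h1) (mem_Ioi.2 h3)
    hβ0.le (by linarith : (0:ℝ) ≤ 1 - β) (by ring)
  have hpt : β • (y + β - 1) + (1 - β) • (y + β) = y := by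
    simp only [smul_eq_mul]; ring
  rw [hpt] at hconv
  simp only [Function.comp, smul_eq_mul] at hconv
  have hrec : Real.Gamma (y + β) = (y + β - 1) * Real.Gamma (y + β - 1) := by
    have := Real.Gamma_add_one h1.ne'
    rw [show y + β - 1 + 1 = y + β by ring] at this
    exact this
  have hGpos : 0 < Real.Gamma (y + β - 1) := Real.Gamma_pos_of_pos h1
  have hGpos2 : 0 < Real.Gamma (y + β) := Real.Gamma_pos_of_pos h3
  have hGpos3 : 0 < Real.Gamma y := Real.Gamma_pos_of_pos h2
  have hlog : Real.log (Real.Gamma (y + β - 1)) =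
      Real.log (Real.Gamma (y + β)) - Real.log (y + β - 1) := by
    rw [hrec, Real.log_mul h1.ne' hGpos.ne']; ring
  rw [hlog] at hconv
  have key : Real.log (Real.Gamma y) + β * Real.log (y + β - 1) ≤
      Real.log (Real.Gamma (y + β)) := by nlinarith
  calc Real.Gamma y * (y + β - 1) ^ β
      = Real.exp (Real.log (Real.Gamma y) + β * Real.log (y + β - 1)) := by
        rw [Real.exp_add, Real.exp_log hGpos3, Real.rpow_def_of_pos h1, mul_comm (Real.log _)]
    _ ≤ Real.exp (Real.log (Real.Gamma (y + β))) := Real.exp_le_exp.2 key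
    _ = Real.Gamma (y + β) := Real.exp_log hGpos2

lemma summable_ml {α : ℝ} (hα : 0 < α) {r : ℝ} (hr : 0 ≤ r) :
    Summable (fun j : ℕ => r ^ j / Real.Gamma (α * j + 1)) := by
  rcases eq_or_lt_of_le hr with h0 | hr
  · apply summable_of_ne_finset_zero (s := {0})
    intro j hj
    have : j ≠ 0 := by simpa using hj
    simp [← h0, zero_pow this]
  set β := min α 1 with hβ
  have hβ0 : 0 < β := lt_min hα one_pos
  have hβ1 : β ≤ 1 := min_le_right _ _
  have hβα : β ≤ α := min_le_left _ _
  apply summable_of_ratio_norm_eventually_le (r := 1/2) (by norm_num)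
  have ht1 : Filter.Tendsto (fun j : ℕ => α * j) Filter.atTop Filter.atTop := by
    exact Filter.Tendsto.const_mul_atTop hα tendsto_natCast_atTop_atTop
  have ht2 : Filter.Tendsto (fun j : ℕ => (α * j + β) ^ β) Filter.atTop Filter.atTop := by
    exact (tendsto_rpow_atTop hβ0).comp (Filter.tendsto_atTop_add_const_right _ β ht1)
  filter_upwards [ht1.eventually_ge_atTop 1, ht2.eventually_ge_atTop (2 * r)] with j hj1 hj2
  set y : ℝ := α * j + 1 with hy
  have hy2 : 2 ≤ y := by linarith
  have hGy : 0 < Real.Gamma y := Real.Gamma_pos_of_pos (by linarith)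
  have hGya : 0 < Real.Gamma (y + α) := Real.Gamma_pos_of_pos (by linarith)
  have hmono : Real.Gamma (y + β) ≤ Real.Gamma (y + α) := by
    rcases eq_or_lt_of_le hβα with h | h
    · rw [h]
    · exact (Real.Gamma_strictMonoOn_Ici (by simp only [mem_Ici]; linarith)
        (by simp only [mem_Ici]; linarith) (by linarith)).le
  have hchain : 2 * r * Real.Gamma y ≤ Real.Gamma (y + α) := by
    have h1 := gamma_convex_lb hβ0 hβ1 hy2
    have h2 : y + β - 1 = α * j + β := by rw [hy]; ring
    rw [h2] at h1
    nlinarith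
  have hexp : α * ((j : ℝ) + 1) + 1 = y + α := by rw [hy]; ring
  rw [Real.norm_eq_abs, Real.norm_eq_abs, Nat.cast_add, Nat.cast_one, hexp,
    abs_div, abs_div, abs_of_pos hGy, abs_of_pos hGya, abs_pow, abs_pow,
    abs_of_pos hr]
  rw [div_le_iff₀ hGya]
  have e : 1/2 * (r^j / Real.Gamma y) * Real.Gamma (y+α)
      = (r^j / Real.Gamma y) * (Real.Gamma (y+α)/2) := by ring
  rw [e]
  calc r^(j+1) = (r^j / Real.Gamma y) * (r * Real.Gamma y) := by field_simp; ring
    _ ≤ (r^j / Real.Gamma y) * (Real.Gamma (y+α)/2) := by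
        apply mul_le_mul_of_nonneg_left (by linarith) (by positivity)


lemma real_beta {a b t : ℝ} (ha : 0 < a) (hb : 0 < b) (ht : 0 < t) :
    ∫ x in (0:ℝ)..t, x ^ (b - 1) * (t - x) ^ (a - 1) =
      Real.Gamma b * Real.Gamma a / Real.Gamma (b + a) * t ^ (b + a - 1) := by
  have hGba : Complex.Gamma ((b : ℂ) + (a : ℂ)) ≠ 0 := by
    rw [← Complex.ofReal_add, Complex.Gamma_ofReal]
    exact_mod_cast (Real.Gamma_pos_of_pos (by linarith)).ne'
  have hbeta : Complex.betaIntegral (b : ℂ) (a : ℂ) =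
      Complex.Gamma b * Complex.Gamma a / Complex.Gamma ((b : ℂ) + a) := by
    rw [eq_div_iff hGba, mul_comm]
    exact (Complex.Gamma_mul_Gamma_eq_betaIntegral (by simpa using hb) (by simpa using ha)).symm
  have hscaled := Complex.betaIntegral_scaled (b : ℂ) (a : ℂ) ht
  have hcongr : (∫ x in (0:ℝ)..t, ((x ^ (b - 1) * (t - x) ^ (a - 1) : ℝ) : ℂ)) =
      ∫ x in (0:ℝ)..t, (x : ℂ) ^ ((b : ℂ) - 1) * ((t : ℂ) - (x : ℂ)) ^ ((a : ℂ) - 1) := by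
    apply intervalIntegral.integral_congr
    intro x hx
    rw [uIcc_of_le ht.le] at hx
    push_cast
    rw [Complex.ofReal_cpow hx.1, Complex.ofReal_cpow (by linarith [hx.2] : (0:ℝ) ≤ t - x)]
    push_cast
    ring
  have := hscaled
  rw [← hcongr, hbeta] at this
  have hrhs : ((t : ℂ)) ^ ((b : ℂ) + (a : ℂ) - 1) = ((t ^ (b + a - 1) : ℝ) : ℂ) := by
    rw [Complex.ofReal_cpow ht.le]; push_cast; ring_nf
  rw [hrhs] at this
  apply Complex.ofReal_injective
  rw [intervalIntegral.integral_ofReal] at this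
  rw [this, ← Complex.ofReal_add, Complex.Gamma_ofReal, Complex.Gamma_ofReal,
    Complex.Gamma_ofReal]
  push_cast
  ring


section MainAux

variable {m : ℕ}

local notation "E" => (Fin m → ℝ) →L[ℝ] (Fin m → ℝ)

lemma norm_pow_le_clm (L : E) : ∀ j : ℕ, ‖L ^ j‖ ≤ ‖L‖ ^ j := by
  intro j
  induction j with
  | zero => simpa [pow_zero, ContinuousLinearMap.one_def] using ContinuousLinearMap.norm_id_le
  | succ n ih =>
    calc ‖L ^ (n + 1)‖ = ‖L ^ n * L‖ := by rw [pow_succ]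
      _ ≤ ‖L ^ n‖ * ‖L‖ := norm_mul_le _ _
      _ ≤ ‖L‖ ^ n * ‖L‖ := by
          exact mul_le_mul_of_nonneg_right ih (norm_nonneg _)
      _ = ‖L‖ ^ (n + 1) := by rw [pow_succ]

lemma ml_sum_norm {α : ℝ} (hα : 0 < α) (L : E) {t : ℝ} (ht : 0 ≤ t) :
    Summable (fun j : ℕ =>
      ‖(t ^ (α * (j : ℝ)) / Real.Gamma (α * (j : ℝ) + 1)) • L ^ j‖) := by
  refine Summable.of_nonneg_of_le (fun j => norm_nonneg _) (fun j => ?_)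
    (summable_ml hα (r := t ^ α * ‖L‖) (by positivity))
  have hΓ : 0 < Real.Gamma (α * (j : ℝ) + 1) := Real.Gamma_pos_of_pos (by positivity)
  rw [norm_smul _ (L ^ j), Real.norm_eq_abs, abs_div, abs_of_nonneg (Real.rpow_nonneg ht _),
    abs_of_pos hΓ]
  have hpow : (t ^ α * ‖L‖) ^ j = t ^ (α * (j : ℝ)) * ‖L‖ ^ j := by
    rw [mul_pow, ← Real.rpow_natCast (t ^ α) j, ← Real.rpow_mul ht]
  rw [hpow, div_mul_eq_mul_div]
  gcongr
  exact norm_pow_le_clm L j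

end MainAux

/-- The matrix Mittag-Leffler series `E(t) = Σ_j t^(αj) L^j / Γ(αj+1)` is
absolutely summable and solves the integral form of the linear fractional
problem `Φ^(α) = L Φ`, `Φ(0) = I`. -/
theorem mittag_leffler_solves_linear_fractional_problem
    (m : ℕ) (α : ℝ) (hα : 0 < α)
    (L : (Fin m → ℝ) →L[ℝ] (Fin m → ℝ)) :
    (∀ t : ℝ, 0 ≤ t →
      Summable (fun j : ℕ =>
        ‖(t ^ (α * (j : ℝ)) / Real.Gamma (α * (j : ℝ) + 1)) • L ^ j‖)) ∧
    (∀ t : ℝ, 0 ≤ t →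
      (∑' j : ℕ, (t ^ (α * (j : ℝ)) / Real.Gamma (α * (j : ℝ) + 1)) • L ^ j) =
      ContinuousLinearMap.id ℝ (Fin m → ℝ) + (Real.Gamma α)⁻¹ •
        ∫ x in (0:ℝ)..t, ((t - x) ^ (α - 1)) •
          (L.comp
            (∑' j : ℕ, (x ^ (α * (j : ℝ)) / Real.Gamma (α * (j : ℝ) + 1)) • L ^ j))) := by
  refine ⟨fun t ht => ml_sum_norm hα L ht, fun t ht => ?_⟩
  have hΓα : 0 < Real.Gamma α := Real.Gamma_pos_of_pos hα
  have hid : ∀ s : ℝ, (s ^ (α * ((0:ℕ) : ℝ)) / Real.Gamma (α * ((0:ℕ) : ℝ) + 1)) • L ^ 0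
      = ContinuousLinearMap.id ℝ (Fin m → ℝ) := by
    intro s
    simp [Real.Gamma_one, ContinuousLinearMap.one_def]
  rcases eq_or_lt_of_le ht with h0 | ht
  · -- t = 0
    subst h0
    rw [intervalIntegral.integral_same, smul_zero, add_zero]
    rw [tsum_eq_single 0 (fun j hj => ?_)]
    · exact hid 0
    · have hj' : (0:ℝ) < α * (j : ℝ) := by
        have : (0:ℝ) < (j : ℝ) := by exact_mod_cast Nat.pos_of_ne_zero hj
        positivity
      rw [Real.zero_rpow hj'.ne', zero_div, zero_smul]
  -- t > 0
  -- the summand coefficient functions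
  have hgInt : ∀ j : ℕ, IntervalIntegrable
      (fun x : ℝ => (t - x) ^ (α - 1) * (x ^ (α * (j : ℝ)) / Real.Gamma (α * (j : ℝ) + 1)))
      volume 0 t := by
    intro j
    have h1 : IntervalIntegrable (fun x : ℝ => x ^ (α - 1)) volume 0 t :=
      intervalIntegrable_rpow' (by linarith)
    have h2 := (h1.comp_sub_left t).symm
    simp only [sub_zero, sub_self] at h2
    refine h2.mul_continuousOn (ContinuousOn.div_const ?_ _)
    intro x _
    exact (Real.continuousAt_rpow_const x _ (Or.inr (by positivity))).continuousWithinAt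
  -- the beta-integral computation
  have hbeta : ∀ j : ℕ, (∫ x in (0:ℝ)..t,
      (t - x) ^ (α - 1) * (x ^ (α * (j : ℝ)) / Real.Gamma (α * (j : ℝ) + 1)))
      = Real.Gamma α *
        (t ^ (α * ((j : ℝ) + 1)) / Real.Gamma (α * ((j : ℝ) + 1) + 1)) := by
    intro j
    have hb : (0:ℝ) < α * (j : ℝ) + 1 := by positivity
    have hΓb : 0 < Real.Gamma (α * (j : ℝ) + 1) := Real.Gamma_pos_of_pos hb
    have hΓc : 0 < Real.Gamma (α * ((j : ℝ) + 1) + 1) :=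
      Real.Gamma_pos_of_pos (by positivity)
    have hcongr : (∫ x in (0:ℝ)..t,
        (t - x) ^ (α - 1) * (x ^ (α * (j : ℝ)) / Real.Gamma (α * (j : ℝ) + 1)))
        = ∫ x in (0:ℝ)..t,
          (x ^ (α * (j : ℝ) + 1 - 1) * (t - x) ^ (α - 1)) *
            (Real.Gamma (α * (j : ℝ) + 1))⁻¹ := by
      apply intervalIntegral.integral_congr
      intro x _
      rw [add_sub_cancel_right]
      ring
    rw [hcongr, intervalIntegral.integral_mul_const, real_beta hα hb ht]
    rw [show α * (j : ℝ) + 1 + α - 1 = α * ((j : ℝ) + 1) by ring,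
      show α * (j : ℝ) + 1 + α = α * ((j : ℝ) + 1) + 1 by ring]
    field_simp
  -- pointwise identity for the integrand
  have hptwise : ∀ x : ℝ, 0 ≤ x →
      (t - x) ^ (α - 1) •
        (L.comp (∑' j : ℕ, (x ^ (α * (j : ℝ)) / Real.Gamma (α * (j : ℝ) + 1)) • L ^ j))
      = ∑' j : ℕ,
          ((t - x) ^ (α - 1) * (x ^ (α * (j : ℝ)) / Real.Gamma (α * (j : ℝ) + 1))) •
            L ^ (j + 1) := by
    intro x hx
    have hs : Summable (fun j : ℕ =>
        (x ^ (α * (j : ℝ)) / Real.Gamma (α * (j : ℝ) + 1)) • L ^ j) :=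
      (ml_sum_norm hα L hx).of_norm
    set T : ((Fin m → ℝ) →L[ℝ] (Fin m → ℝ)) →L[ℝ] ((Fin m → ℝ) →L[ℝ] (Fin m → ℝ)) :=
      (t - x) ^ (α - 1) •
        (ContinuousLinearMap.compL ℝ (Fin m → ℝ) (Fin m → ℝ) (Fin m → ℝ) L) with hT
    have hmap := T.map_tsum hs
    have hTapp : ∀ A, T A = (t - x) ^ (α - 1) • (L.comp A) := by
      intro A
      rw [hT]
      simp [ContinuousLinearMap.compL_apply]
    rw [← hTapp, hmap]
    apply tsum_congr
    intro j
    rw [hTapp]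
    rw [ContinuousLinearMap.comp_smul, smul_smul, ← ContinuousLinearMap.mul_def,
      ← pow_succ']
  -- integrability of each term on `Ioc 0 t`
  have hF_int : ∀ j : ℕ, Integrable
      (fun x : ℝ =>
        ((t - x) ^ (α - 1) * (x ^ (α * (j : ℝ)) / Real.Gamma (α * (j : ℝ) + 1))) •
          L ^ (j + 1)) (volume.restrict (Ioc (0:ℝ) t)) :=
    fun j => ((hgInt j).1).smul_const _
  -- norm integrals and their summability
  have hnormint : ∀ j : ℕ, (∫ x in Ioc (0:ℝ) t,
      ‖((t - x) ^ (α - 1) * (x ^ (α * (j : ℝ)) / Real.Gamma (α * (j : ℝ) + 1))) •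
        L ^ (j + 1)‖)
      = (Real.Gamma α *
          (t ^ (α * ((j : ℝ) + 1)) / Real.Gamma (α * ((j : ℝ) + 1) + 1))) * ‖L ^ (j + 1)‖ := by
    intro j
    have hΓb : 0 < Real.Gamma (α * (j : ℝ) + 1) := Real.Gamma_pos_of_pos (by positivity)
    have heq : ∀ x ∈ Ioc (0:ℝ) t,
        ‖((t - x) ^ (α - 1) * (x ^ (α * (j : ℝ)) / Real.Gamma (α * (j : ℝ) + 1))) •
          L ^ (j + 1)‖
        = ((t - x) ^ (α - 1) * (x ^ (α * (j : ℝ)) / Real.Gamma (α * (j : ℝ) + 1))) *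
            ‖L ^ (j + 1)‖ := by
      intro x hx
      rw [norm_smul _ (L ^ (j + 1)), Real.norm_eq_abs, abs_of_nonneg]
      have h1 : (0:ℝ) ≤ (t - x) ^ (α - 1) :=
        Real.rpow_nonneg (by linarith [hx.2]) _
      have h2 : (0:ℝ) ≤ x ^ (α * (j : ℝ)) := Real.rpow_nonneg hx.1.le _
      positivity
    rw [setIntegral_congr_fun measurableSet_Ioc heq, MeasureTheory.integral_mul_const,
      ← intervalIntegral.integral_of_le ht.le, hbeta j]
  have hmaster : Summable (fun j : ℕ =>
      (Real.Gamma α *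
        (t ^ (α * ((j : ℝ) + 1)) / Real.Gamma (α * ((j : ℝ) + 1) + 1))) * ‖L ^ (j + 1)‖) := by
    have hS := (summable_ml hα (r := t ^ α * ‖L‖) (by positivity)).comp_injective
      (add_left_injective 1)
    have hS2 : Summable (fun j : ℕ =>
        Real.Gamma α * ((t ^ α * ‖L‖) ^ (j + 1) / Real.Gamma (α * ((j : ℝ) + 1) + 1))) := by
      refine (hS.congr fun j => ?_).mul_left _
      simp only [Function.comp]
      push_cast
      ring_nf
    refine Summable.of_nonneg_of_le (fun j => ?_) (fun j => ?_) hS2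
    · have : (0:ℝ) ≤ t ^ (α * ((j : ℝ) + 1)) := Real.rpow_nonneg ht.le _
      have hΓc : 0 < Real.Gamma (α * ((j : ℝ) + 1) + 1) :=
        Real.Gamma_pos_of_pos (by positivity)
      positivity
    · have hΓc : 0 < Real.Gamma (α * ((j : ℝ) + 1) + 1) :=
        Real.Gamma_pos_of_pos (by positivity)
      have hpow : (t ^ α * ‖L‖) ^ (j + 1) = t ^ (α * ((j : ℝ) + 1)) * ‖L‖ ^ (j + 1) := by
        rw [mul_pow, ← Real.rpow_natCast (t ^ α) (j + 1), ← Real.rpow_mul ht.le]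
        push_cast
        ring_nf
      rw [hpow]
      have h1 : t ^ (α * ((j : ℝ) + 1)) / Real.Gamma (α * ((j : ℝ) + 1) + 1) * ‖L ^ (j + 1)‖
          ≤ t ^ (α * ((j : ℝ) + 1)) * ‖L‖ ^ (j + 1) / Real.Gamma (α * ((j : ℝ) + 1) + 1) := by
        rw [div_mul_eq_mul_div]
        gcongr
        exact norm_pow_le_clm L (j + 1)
      calc (Real.Gamma α * (t ^ (α * ((j : ℝ) + 1)) / Real.Gamma (α * ((j : ℝ) + 1) + 1)))
            * ‖L ^ (j + 1)‖
          = Real.Gamma α * (t ^ (α * ((j : ℝ) + 1)) / Real.Gamma (α * ((j : ℝ) + 1) + 1)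
              * ‖L ^ (j + 1)‖) := by ring
        _ ≤ Real.Gamma α *
              (t ^ (α * ((j : ℝ) + 1)) * ‖L‖ ^ (j + 1) / Real.Gamma (α * ((j : ℝ) + 1) + 1)) :=
            mul_le_mul_of_nonneg_left h1 hΓα.le
  have hF_sum : Summable (fun j : ℕ => ∫ x in Ioc (0:ℝ) t,
      ‖((t - x) ^ (α - 1) * (x ^ (α * (j : ℝ)) / Real.Gamma (α * (j : ℝ) + 1))) •
        L ^ (j + 1)‖) := by
    rw [funext hnormint]
    exact hmaster
  have hswap := MeasureTheory.integral_tsum_of_summable_integral_norm hF_int hF_sum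
  -- compute the right-hand side
  have hrhs : (∫ x in (0:ℝ)..t, ((t - x) ^ (α - 1)) •
        (L.comp (∑' j : ℕ, (x ^ (α * (j : ℝ)) / Real.Gamma (α * (j : ℝ) + 1)) • L ^ j)))
      = ∑' j : ℕ, (Real.Gamma α *
          (t ^ (α * ((j : ℝ) + 1)) / Real.Gamma (α * ((j : ℝ) + 1) + 1))) • L ^ (j + 1) := by
    rw [intervalIntegral.integral_congr (g := fun x => ∑' j : ℕ,
        ((t - x) ^ (α - 1) * (x ^ (α * (j : ℝ)) / Real.Gamma (α * (j : ℝ) + 1))) •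
          L ^ (j + 1)) ?_]
    · rw [intervalIntegral.integral_of_le ht.le, ← hswap]
      apply tsum_congr
      intro j
      rw [_root_.integral_smul_const, ← intervalIntegral.integral_of_le ht.le, hbeta j]
    · intro x hx
      rw [uIcc_of_le ht.le] at hx
      exact hptwise x hx.1
  rw [hrhs]
  -- summability of the shifted series
  have hshift : Summable (fun j : ℕ =>
      (Real.Gamma α *
        (t ^ (α * ((j : ℝ) + 1)) / Real.Gamma (α * ((j : ℝ) + 1) + 1))) • L ^ (j + 1)) := by
    apply Summable.of_norm
    refine Summable.congr (f := fun j : ℕ =>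
      (Real.Gamma α *
        (t ^ (α * ((j : ℝ) + 1)) / Real.Gamma (α * ((j : ℝ) + 1) + 1))) * ‖L ^ (j + 1)‖)
      ?_ fun j => ?_
    · exact hmaster
    · rw [norm_smul _ (L ^ (j + 1)), Real.norm_eq_abs, abs_of_nonneg]
      have : (0:ℝ) ≤ t ^ (α * ((j : ℝ) + 1)) := Real.rpow_nonneg ht.le _
      have hΓc : 0 < Real.Gamma (α * ((j : ℝ) + 1) + 1) :=
        Real.Gamma_pos_of_pos (by positivity)
      positivity
  rw [← Summable.tsum_const_smul ((Real.Gamma α)⁻¹) hshift]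
  have hLHS := Summable.tsum_eq_zero_add ((ml_sum_norm hα L ht.le).of_norm
    (f := fun j : ℕ => (t ^ (α * (j : ℝ)) / Real.Gamma (α * (j : ℝ) + 1)) • L ^ j))
  rw [hLHS, hid t]
  congr 1
  apply tsum_congr
  intro j
  rw [smul_smul, ← mul_assoc, inv_mul_cancel₀ hΓα.ne', one_mul]
  push_cast
  ring_nf
end
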